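/- The class 𝒞 is nonempty and contains a C¹-interior point within 𝒜: there exist (f,g) ∈ 𝒜 satisfying So, Ho, Ee and Ca, and a real ε>0, such that every pair (f̃,g̃) ∈ 𝒜 with sup_{x∈I}|f̃(x)−f(x)|+sup_{x∈I}|f̃′(x)−f′(x)|<ε and sup_{x∈I}|g̃(x)−g(x)|+sup_{x∈I}|g̃′(x)−g′(x)|<ε also satisfies So, Ho, Ee and Ca. -/

import Mathlib

open Set Function MeasureTheory

noncomputable section

namespace IFSPaper

/-- The closed unit interval `I = [0,1]` as a subset of `ℝ`. -/
def unitI : Set ℝ := Set.Icc 0 1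

/-- Membership in the class `𝒜`: `f, g : I → I` are `C¹` diffeomorphisms onto their
images with `f 0 = 0`, `g 1 = 1`, `f x < x < g x` on `(0,1)` and `0 < g 0 < f 1 < 1`. -/
structure MemA (f g : ℝ → ℝ) : Prop where
  f_maps : Set.MapsTo f unitI unitI
  g_maps : Set.MapsTo g unitI unitI
  f_c1 : ContDiff ℝ 1 f
  g_c1 : ContDiff ℝ 1 g
  f_inj : Set.InjOn f unitI
  g_inj : Set.InjOn g unitI
  f_deriv_ne : ∀ x ∈ unitI, deriv f x ≠ 0
  g_deriv_ne : ∀ x ∈ unitI, deriv g x ≠ 0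
  f_zero : f 0 = 0
  g_one : g 1 = 1
  f_lt_id : ∀ x ∈ Set.Ioo (0:ℝ) 1, f x < x
  id_lt_g : ∀ x ∈ Set.Ioo (0:ℝ) 1, x < g x
  g0_pos : 0 < g 0
  g0_lt_f1 : g 0 < f 1
  f1_lt_one : f 1 < 1

/-- The element of the semigroup `⟨f,g⟩₊` associated to a word in the two generators
(`true ↦ f`, `false ↦ g`). -/
def word (f g : ℝ → ℝ) : List Bool → ℝ → ℝ
  | [] => id
  | b :: t => (if b then f else g) ∘ word f g t

/-- The semigroup orbit `O₊(x) = {φ x : φ ∈ ⟨f,g⟩₊}` of a point `x`. -/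
def orbitP (f g : ℝ → ℝ) (x : ℝ) : Set ℝ :=
  {y | ∃ w : List Bool, w ≠ [] ∧ word f g w x = y}

/-- `K` is a minimal set for the action of `⟨f,g⟩₊` on `I`. -/
def IsMinimalSet (f g : ℝ → ℝ) (K : Set ℝ) : Prop :=
  K.Nonempty ∧ K ⊆ unitI ∧ ∀ x ∈ K, closure (orbitP f g x) = K

/-- The overlapping region `W = [g 0, f 1]`. -/
def ovW (f g : ℝ → ℝ) : Set ℝ := Set.Icc (g 0) (f 1)

/-- The fundamental domain `Fₙ = [f^[n+1] 1, f^[n] 1]`. -/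
def Fint (f : ℝ → ℝ) (n : ℕ) : Set ℝ := Set.Icc (f^[n+1] 1) (f^[n] 1)

/-- The fundamental domain `Gₙ = [g^[n] 0, g^[n+1] 0]`. -/
def Gint (g : ℝ → ℝ) (n : ℕ) : Set ℝ := Set.Icc (g^[n] 0) (g^[n+1] 0)

/-- Single overlapping property `So`: `f² 1 < g 0` and `f 1 < g² 0`. -/
def So (f g : ℝ → ℝ) : Prop := f (f 1) < g 0 ∧ f 1 < g (g 0)

/-- A (nonempty) closed bounded interval. -/
def IsClosedInterval (A : Set ℝ) : Prop := ∃ a b : ℝ, a ≤ b ∧ A = Set.Icc a b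

/-- A closed bounded interval with nonempty interior. -/
def IsNondegClosedInterval (A : Set ℝ) : Prop := ∃ a b : ℝ, a < b ∧ A = Set.Icc a b

/-- A nonempty open bounded interval. -/
def IsOpenInterval (J : Set ℝ) : Prop := ∃ a b : ℝ, a < b ∧ J = Set.Ioo a b

/-- Hole property `Ho` witnessed by the pair of holes `(Hf, Hg)`. -/
def HoleAt (f g : ℝ → ℝ) (Hf Hg : Set ℝ) : Prop :=
  IsNondegClosedInterval Hf ∧ IsNondegClosedInterval Hg ∧
  Hf ⊆ interior (Fint f 1 \ ovW f g) ∧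
  Hg ⊆ interior (Gint g 1 \ ovW f g) ∧
  g '' Hf = Hg ∧ f '' Hg = Hf

/-- Hole property `Ho`. -/
def Ho (f g : ℝ → ℝ) : Prop := ∃ Hf Hg : Set ℝ, HoleAt f g Hf Hg

/-- The induced (first-return) map `𝓕 : F₁ \ {f 1} → G₁`,
`𝓕 x = g^[-n x] (f⁻¹ x)` where `n x` is least with `g^[-n x] (f⁻¹ x) ∈ G₁`. -/
def calF (f g : ℝ → ℝ) (x : ℝ) : ℝ :=
  (Function.invFunOn g unitI)^[sInf {n : ℕ |
      (Function.invFunOn g unitI)^[n] (Function.invFunOn f unitI x) ∈ Gint g 1}]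
    (Function.invFunOn f unitI x)

/-- The induced (first-return) map `𝓖 : G₁ \ {g 0} → F₁`. -/
def calG (f g : ℝ → ℝ) (x : ℝ) : ℝ :=
  (Function.invFunOn f unitI)^[sInf {n : ℕ |
      (Function.invFunOn f unitI)^[n] (Function.invFunOn g unitI x) ∈ Fint f 1}]
    (Function.invFunOn g unitI x)

/-- Eventual expansion property `Ee`: `𝓕` is uniformly expanding outside `Hf`
and `𝓖` outside `Hg` (at all points where the derivative makes sense). -/
def Ee (f g : ℝ → ℝ) (Hf Hg : Set ℝ) : Prop :=
  ∃ μ : ℝ, 1 < μ ∧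
    (∀ y ∈ Fint f 1 \ Hf, DifferentiableAt ℝ (calF f g) y → μ < deriv (calF f g) y) ∧
    (∀ y ∈ Gint g 1 \ Hg, DifferentiableAt ℝ (calG f g) y → μ < deriv (calG f g) y)

/-- The ruination region `R_f = 𝓕⁻¹(Hg) ⊆ F₁`. -/
def Rf (f g : ℝ → ℝ) (Hg : Set ℝ) : Set ℝ :=
  {x | x ∈ Fint f 1 \ {f 1} ∧ calF f g x ∈ Hg}

/-- The ruination region `R_g = 𝓖⁻¹(Hf) ⊆ G₁`. -/
def Rg (f g : ℝ → ℝ) (Hf : Set ℝ) : Set ℝ :=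
  {x | x ∈ Gint g 1 \ {g 0} ∧ calG f g x ∈ Hf}

/-- Castration property `Ca`: `W ⊆ int R_f ∪ int R_g`. -/
def Ca (f g : ℝ → ℝ) (Hf Hg : Set ℝ) : Prop :=
  ovW f g ⊆ interior (Rf f g Hg) ∪ interior (Rg f g Hf)

/-- Membership in the class `𝒞` with the given holes `(Hf, Hg)`:
`(f,g) ∈ 𝒜` together with `So`, `Ho`, `Ee` and `Ca`. -/
def MemC (f g : ℝ → ℝ) (Hf Hg : Set ℝ) : Prop :=
  MemA f g ∧ So f g ∧ HoleAt f g Hf Hg ∧ Ee f g Hf Hg ∧ Ca f g Hf Hg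

/-- The interval `I₋₁ = [0, 1/3 - ε]` of the appendix example. -/
def Im1 (ε : ℝ) : Set ℝ := Set.Icc 0 (1/3 - ε)

/-- The interval `I₀ = [1/3 + ε, 2/3 - ε]` of the appendix example. -/
def Iz (ε : ℝ) : Set ℝ := Set.Icc (1/3 + ε) (2/3 - ε)

/-- The interval `I₁ = [2/3 + ε, 1]` of the appendix example. -/
def Ip1 (ε : ℝ) : Set ℝ := Set.Icc (2/3 + ε) 1

/-- The inclusion property of the appendix example. -/
def InclusionProp (f g : ℝ → ℝ) (ε : ℝ) : Prop :=
  f '' Im1 ε ⊆ Im1 ε ∧ f '' Iz ε ⊆ interior (Im1 ε) ∧ f '' Ip1 ε ⊆ interior (Iz ε) ∧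
  g '' Ip1 ε ⊆ Ip1 ε ∧ g '' Iz ε ⊆ interior (Ip1 ε) ∧ g '' Im1 ε ⊆ interior (Iz ε)

/-- The strong uniform contraction property of the appendix example. -/
def StrongContraction (f g : ℝ → ℝ) (ε lam : ℝ) : Prop :=
  ∀ x ∈ Im1 ε ∪ Iz ε ∪ Ip1 ε, deriv f x < lam ∧ deriv g x < lam

/-!
The witness is an explicit polynomial `f₀` paired with its mirror image `g₀ = 1 - f₀ (1 - ·)`:
`f₀' ≤ 97/100` outside the core `(57/100, 83/100)`, and `f₀ ∘ g₀` has the fixed points `4/25`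
and `11/25`. For `(F, G)` that is `10⁻⁹`-close in `C¹`, `F ∘ G` still has fixed points `p, q`
nearby, and the holes are `[p, q]` and `[G p, G q]`.

Every `x ∈ (f (g 0), f 1)` is `f (gᴺ z)` for some `z ∈ (g 0, g² 0]`, and then `𝓕 x = z`; so near
such a point `𝓕` inverts the branch `f ∘ gᴺ`. Since `g' ≤ 1` on `[g 0, 1]` and `f' ≤ 49/50`
off the hole, that branch contracts by `49/50`, whence `𝓕' ≥ 50/49`; at `f 1` the map `𝓕` jumps
up to `1`. Castration holds because `f ∘ g` maps the hole `[G p, G q]` across the left part of `W`.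
Conjugation by `x ↦ 1 - x` exchanges `f` and `g` and turns `𝓖` into `𝓕`, so every statement about
`𝓖` and `R_g` is obtained from the one about `𝓕` and `R_f` for the mirrored pair.
-/

end IFSPaper

open Filter Topology

lemma Nat.sInf_eq_of_mem_iff_of_forall_lt_notMem {A B : Set ℕ}
    (h : ∀ n, (∀ j < n, j ∉ A) → (n ∈ A ↔ n ∈ B)) : sInf A = sInf B := by
  rcases A.eq_empty_or_nonempty with rfl | hA
  · have hB : B = ∅ := Set.eq_empty_of_forall_notMem fun n hn =>
      ((h n fun _ _ => Set.notMem_empty _).2 hn)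
    rw [hB]
  · have hlt : ∀ j < sInf A, j ∉ A := fun j hj => Nat.notMem_of_lt_sInf hj
    have hmem : sInf A ∈ B := (h _ hlt).1 (Nat.sInf_mem hA)
    refine le_antisymm ?_ (Nat.sInf_le hmem)
    by_contra! hB
    exact hlt _ hB ((h _ fun j hj => hlt j (hj.trans hB)).2 (Nat.sInf_mem ⟨_, hmem⟩))

lemma Set.LeftInvOn.iterate_apply_iterate_add {α : Type*} {φ g : α → α} {s : Set α}
    (hinv : LeftInvOn φ g s) (hg : MapsTo g s s) {z : α} (hz : z ∈ s) (j k : ℕ) :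
    φ^[j] (g^[j + k] z) = g^[k] z := by
  induction j with
  | zero => simp
  | succ j ih =>
    rw [Function.iterate_succ_apply, show j + 1 + k = (j + k) + 1 by omega,
      Function.iterate_succ_apply', hinv ((hg.iterate _) hz), ih]

lemma eventually_nhdsLT_of_eventually_comp {φ : ℝ → ℝ} {a z : ℝ} (haz : a < z)
    (hφ : ContinuousOn φ (Icc a z)) (hmono : StrictMonoOn φ (Icc a z)) {P : ℝ → Prop}
    (hP : ∀ᶠ w in 𝓝[<] z, P (φ w)) : ∀ᶠ x in 𝓝[<] (φ z), P x := by
  obtain ⟨b, hb, hsub⟩ := (mem_nhdsLT_iff_exists_mem_Ico_Ioo_subset haz).1 hP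
  have hbz : φ b < φ z := hmono ⟨hb.1, hb.2.le⟩ (right_mem_Icc.2 haz.le) hb.2
  filter_upwards [Ioo_mem_nhdsLT hbz] with x hx
  obtain ⟨w, hw, rfl⟩ :=
    intermediate_value_Ioo hb.2.le (hφ.mono (Icc_subset_Icc_left hb.1)) hx
  exact hsub hw

lemma le_deriv_of_eventually_le_slope {φ : ℝ → ℝ} {y c : ℝ} {l : Filter ℝ} [l.NeBot]
    (hl : l ≤ 𝓝[≠] y) (hd : DifferentiableAt ℝ φ y) (h : ∀ᶠ x in l, c ≤ slope φ y x) :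
    c ≤ deriv φ y :=
  ge_of_tendsto ((hasDerivAt_iff_tendsto_slope.1 hd.hasDerivAt).mono_left hl) h

lemma sub_le_mul_sub_of_deriv_le {φ : ℝ → ℝ} (hφ : Differentiable ℝ φ) {a b C : ℝ} (hab : a ≤ b)
    (hd : ∀ t ∈ Ioo a b, deriv φ t ≤ C) : φ b - φ a ≤ C * (b - a) :=
  (convex_Icc a b).image_sub_le_mul_sub_of_deriv_le hφ.continuous.continuousOn
    hφ.differentiableOn (by rwa [interior_Icc]) a (left_mem_Icc.2 hab) b (right_mem_Icc.2 hab) hab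

lemma exists_mem_Icc_eq_self {φ : ℝ → ℝ} {a b : ℝ} (hab : a ≤ b) (hφ : ContinuousOn φ (Icc a b))
    (ha : a ≤ φ a) (hb : φ b ≤ b) : ∃ c ∈ Icc a b, φ c = c := by
  obtain ⟨c, hc, hφc⟩ := intermediate_value_Icc' hab (hφ.sub continuousOn_id)
    (show (0 : ℝ) ∈ Icc (φ b - b) (φ a - a) from ⟨by linarith, by linarith⟩)
  exact ⟨c, hc, sub_eq_zero.1 hφc⟩

namespace IFSPaper

/-! ## Pairs in `𝒜` -/

lemma Fint_one (f : ℝ → ℝ) : Fint f 1 = Icc (f (f 1)) (f 1) := by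
  simp [Fint]

lemma Gint_one (g : ℝ → ℝ) : Gint g 1 = Icc (g 0) (g (g 0)) := by
  simp [Gint]

namespace MemA

variable {f g : ℝ → ℝ}

lemma continuous_f (h : MemA f g) : Continuous f := h.f_c1.continuous

lemma continuous_g (h : MemA f g) : Continuous g := h.g_c1.continuous

lemma differentiable_f (h : MemA f g) : Differentiable ℝ f := h.f_c1.differentiable one_ne_zero

lemma differentiable_g (h : MemA f g) : Differentiable ℝ g := h.g_c1.differentiable one_ne_zero

lemma g_zero_lt_one (h : MemA f g) : g 0 < 1 := h.g0_lt_f1.trans h.f1_lt_one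

lemma f_one_pos (h : MemA f g) : 0 < f 1 := h.g0_pos.trans h.g0_lt_f1

lemma strictMonoOn_f (h : MemA f g) : StrictMonoOn f unitI :=
  h.continuous_f.continuousOn.strictMonoOn_of_injOn_Icc zero_le_one
    (by rw [h.f_zero]; exact h.f_one_pos.le) h.f_inj

lemma strictMonoOn_g (h : MemA f g) : StrictMonoOn g unitI :=
  h.continuous_g.continuousOn.strictMonoOn_of_injOn_Icc zero_le_one
    (by rw [h.g_one]; exact h.g_zero_lt_one.le) h.g_inj

lemma le_g (h : MemA f g) {t : ℝ} (ht : t ∈ unitI) : t ≤ g t := by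
  rcases ht.1.eq_or_lt with rfl | h0
  · exact h.g0_pos.le
  rcases ht.2.eq_or_lt with rfl | h1
  · rw [h.g_one]
  exact (h.id_lt_g t ⟨h0, h1⟩).le

lemma f_le (h : MemA f g) {t : ℝ} (ht : t ∈ unitI) : f t ≤ t := by
  rcases ht.1.eq_or_lt with rfl | h0
  · rw [h.f_zero]
  rcases ht.2.eq_or_lt with rfl | h1
  · exact h.f1_lt_one.le
  exact (h.f_lt_id t ⟨h0, h1⟩).le

lemma Icc_subset_image_f (h : MemA f g) : Icc 0 (f 1) ⊆ f '' unitI := by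
  simpa [h.f_zero, unitI] using intermediate_value_Icc zero_le_one h.continuous_f.continuousOn

lemma Icc_subset_image_g (h : MemA f g) : Icc (g 0) 1 ⊆ g '' unitI := by
  simpa [h.g_one, unitI] using intermediate_value_Icc zero_le_one h.continuous_g.continuousOn

lemma invFunOn_f_mem (h : MemA f g) {y : ℝ} (hy : y ∈ Icc 0 (f 1)) :
    invFunOn f unitI y ∈ unitI ∧ f (invFunOn f unitI y) = y :=
  ⟨invFunOn_mem (h.Icc_subset_image_f hy), invFunOn_eq (h.Icc_subset_image_f hy)⟩

lemma invFunOn_g_mem (h : MemA f g) {y : ℝ} (hy : y ∈ Icc (g 0) 1) :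
    invFunOn g unitI y ∈ unitI ∧ g (invFunOn g unitI y) = y :=
  ⟨invFunOn_mem (h.Icc_subset_image_g hy), invFunOn_eq (h.Icc_subset_image_g hy)⟩

lemma g_g_zero_lt_g_f_one (h : MemA f g) : g (g 0) < g (f 1) :=
  h.strictMonoOn_g (h.g_maps ⟨le_rfl, zero_le_one⟩) (h.f_maps ⟨zero_le_one, le_rfl⟩) h.g0_lt_f1

lemma g_g_zero_lt_one (h : MemA f g) : g (g 0) < 1 := by
  simpa [h.g_one] using h.strictMonoOn_g ⟨h.g0_pos.le, h.g_zero_lt_one.le⟩ ⟨zero_le_one, le_rfl⟩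
    h.g_zero_lt_one

lemma f_g_zero_lt_f_f_one (h : MemA f g) : f (g 0) < f (f 1) :=
  h.strictMonoOn_f (h.g_maps ⟨le_rfl, zero_le_one⟩) (h.f_maps ⟨zero_le_one, le_rfl⟩) h.g0_lt_f1

lemma g_iterate_mem (h : MemA f g) {t : ℝ} (ht : t ∈ unitI) (n : ℕ) : g^[n] t ∈ unitI :=
  (h.g_maps.iterate n) ht

lemma g_g_zero_lt_g_iterate (h : MemA f g) {z : ℝ} (hz : z ∈ Ioc (g 0) 1) :
    ∀ k, g (g 0) < g^[k + 1] z
  | 0 => h.strictMonoOn_g ⟨h.g0_pos.le, h.g_zero_lt_one.le⟩ ⟨h.g0_pos.le.trans hz.1.le, hz.2⟩ hz.1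
  | k + 1 => by
    rw [Function.iterate_succ_apply']
    exact (h.g_g_zero_lt_g_iterate hz k).trans_le
      (h.le_g (h.g_iterate_mem ⟨h.g0_pos.le.trans hz.1.le, hz.2⟩ _))

lemma calF_f_g_iterate (h : MemA f g) {z : ℝ} (hz : z ∈ Ioc (g 0) (g (g 0))) (N : ℕ) :
    calF f g (f (g^[N] z)) = z := by
  -- the backward `g`-orbit of `gᴺ z` stays above `g² 0` until it reaches `z`
  have hzI : z ∈ unitI := ⟨h.g0_pos.le.trans hz.1.le, hz.2.trans h.g_g_zero_lt_one.le⟩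
  have hinv : LeftInvOn (invFunOn g unitI) g unitI := h.g_inj.leftInvOn_invFunOn
  have hpre (j k : ℕ) : (invFunOn g unitI)^[j] (g^[j + k] z) = g^[k] z :=
    Set.LeftInvOn.iterate_apply_iterate_add hinv h.g_maps hzI j k
  have hN : N ∈ {n | (invFunOn g unitI)^[n] (g^[N] z) ∈ Gint g 1} := by
    have := hpre N 0
    rw [add_zero, Function.iterate_zero_apply] at this
    rw [Set.mem_ofPred_eq, Gint_one, this]
    exact ⟨hz.1.le, hz.2⟩
  have hsInf : sInf {n | (invFunOn g unitI)^[n] (g^[N] z) ∈ Gint g 1} = N := by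
    refine le_antisymm (Nat.sInf_le hN) (le_csInf ⟨N, hN⟩ fun j hj => ?_)
    by_contra! hjN
    obtain ⟨k, rfl⟩ := Nat.exists_eq_add_of_lt hjN
    rw [Set.mem_ofPred_eq, Gint_one, add_assoc, hpre j (k + 1)] at hj
    exact (h.g_g_zero_lt_g_iterate ⟨hz.1, hzI.2⟩ k).not_ge hj.2
  rw [calF, h.f_inj.leftInvOn_invFunOn (h.g_iterate_mem hzI N), hsInf]
  simpa using hpre N 0

lemma tendsto_g_iterate (h : MemA f g) :
    Tendsto (fun n => g^[n] (g 0)) atTop (𝓝 1) := by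
  have hI : ∀ n, g^[n] (g 0) ∈ unitI := fun n => h.g_iterate_mem (h.g_maps ⟨le_rfl, zero_le_one⟩) n
  have hmono : Monotone fun n => g^[n] (g 0) := monotone_nat_of_le_succ fun n => by
    rw [Function.iterate_succ_apply']; exact h.le_g (hI n)
  have hbdd : BddAbove (range fun n => g^[n] (g 0)) := ⟨1, by rintro _ ⟨n, rfl⟩; exact (hI n).2⟩
  have hlim := tendsto_atTop_ciSup hmono hbdd
  set L := ⨆ n, g^[n] (g 0)
  have hfix : g L = L := isFixedPt_of_tendsto_iterate hlim h.continuous_g.continuousAt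
  have hL0 : 0 < L := h.g0_pos.trans_le (le_ciSup hbdd 0)
  have hL1 : L ≤ 1 := ciSup_le fun n => (hI n).2
  rcases hL1.eq_or_lt with hL | hL
  · rwa [← hL]
  · exact absurd hfix (h.id_lt_g L ⟨hL0, hL⟩).ne'

lemma exists_g_iterate_eq (h : MemA f g) {u : ℝ} (hu : u ∈ Ioo (g 0) 1) :
    ∃ N, ∃ z ∈ Ioc (g 0) (g (g 0)), g^[N] z = u := by
  have hex : ∃ n, u ≤ g^[n] (g (g 0)) := by
    obtain ⟨n, hn⟩ := ((tendsto_order.1 h.tendsto_g_iterate).1 u hu.2).exists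
    refine ⟨n, hn.le.trans ?_⟩
    calc g^[n] (g 0) ≤ g (g^[n] (g 0)) :=
          h.le_g (h.g_iterate_mem (h.g_maps ⟨le_rfl, zero_le_one⟩) n)
      _ = g^[n] (g (g 0)) := by rw [← Function.iterate_succ_apply' g, Function.iterate_succ_apply]
  classical
  set N := Nat.find hex
  have hlow : g^[N] (g 0) < u := by
    rcases hN : N with _ | M
    · simpa using hu.1
    · have := Nat.find_min hex (show M < N by omega)
      rwa [not_le, ← Function.iterate_succ_apply] at this
  have hcont : ContinuousOn (g^[N]) (Icc (g 0) (g (g 0))) :=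
    (h.continuous_g.iterate N).continuousOn
  obtain ⟨z, hz, hzu⟩ := intermediate_value_Ioc (h.le_g ⟨h.g0_pos.le, h.g_zero_lt_one.le⟩)
    hcont ⟨hlow, Nat.find_spec hex⟩
  exact ⟨N, z, hz, hzu⟩

lemma calF_spec (h : MemA f g) {x : ℝ} (hx : x ∈ Ioo (f (g 0)) (f 1)) :
    calF f g x ∈ Ioc (g 0) (g (g 0)) ∧ ∃ N, f (g^[N] (calF f g x)) = x := by
  obtain ⟨huI, hfu⟩ := h.invFunOn_f_mem
    ⟨h.f_zero ▸ (h.strictMonoOn_f.monotoneOn ⟨le_rfl, zero_le_one⟩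
      (h.g_maps ⟨le_rfl, zero_le_one⟩) h.g0_pos.le).trans hx.1.le, hx.2.le⟩
  set u := invFunOn f unitI x
  have hu : u ∈ Ioo (g 0) 1 := by
    refine ⟨?_, ?_⟩
    · by_contra! hle
      have := h.strictMonoOn_f.monotoneOn huI (h.g_maps ⟨le_rfl, zero_le_one⟩) hle
      rw [hfu] at this
      exact hx.1.not_ge this
    · by_contra! hle
      rw [le_antisymm huI.2 hle, eq_comm] at hfu
      exact hx.2.ne hfu
  obtain ⟨N, z, hz, hzu⟩ := h.exists_g_iterate_eq hu
  rw [← hfu, ← hzu, h.calF_f_g_iterate hz]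
  exact ⟨hz, N, rfl⟩

lemma calF_f_one (h : MemA f g) : calF f g (f 1) = 1 := by
  have hg : invFunOn g unitI 1 = 1 := by
    simpa [h.g_one] using
      h.g_inj.leftInvOn_invFunOn (show (1 : ℝ) ∈ unitI from ⟨zero_le_one, le_rfl⟩)
  rw [calF, h.f_inj.leftInvOn_invFunOn ⟨zero_le_one, le_rfl⟩, Function.iterate_fixed hg]

lemma strictMonoOn_g_iterate (h : MemA f g) : ∀ N, StrictMonoOn (g^[N]) unitI
  | 0 => strictMonoOn_id
  | N + 1 => by
    rw [Function.iterate_succ']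
    exact h.strictMonoOn_g.comp (h.strictMonoOn_g_iterate N) (h.g_maps.iterate N)

lemma mapsTo_g_Icc (h : MemA f g) : MapsTo g (Icc (g 0) 1) (Icc (g 0) 1) := fun t ht =>
  have htI : t ∈ unitI := ⟨h.g0_pos.le.trans ht.1, ht.2⟩
  ⟨ht.1.trans (h.le_g htI), (h.g_maps htI).2⟩

lemma g_iterate_sub_le (h : MemA f g) (hg1 : ∀ t ∈ Icc (g 0) 1, deriv g t ≤ 1)
    {a b : ℝ} (ha : g 0 ≤ a) (hab : a ≤ b) (hb : b ≤ 1) :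
    ∀ N, g^[N] b - g^[N] a ≤ b - a
  | 0 => le_rfl
  | N + 1 => by
    have haN := (h.mapsTo_g_Icc.iterate N) ⟨ha, hab.trans hb⟩
    have hbN := (h.mapsTo_g_Icc.iterate N) ⟨ha.trans hab, hb⟩
    have hle : g^[N] a ≤ g^[N] b := (h.strictMonoOn_g_iterate N).monotoneOn
      ⟨h.g0_pos.le.trans ha, hab.trans hb⟩ ⟨h.g0_pos.le.trans (ha.trans hab), hb⟩ hab
    rw [Function.iterate_succ_apply', Function.iterate_succ_apply']
    calc g (g^[N] b) - g (g^[N] a) ≤ 1 * (g^[N] b - g^[N] a) :=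
          sub_le_mul_sub_of_deriv_le h.differentiable_g hle fun t ht =>
            hg1 t ⟨haN.1.trans ht.1.le, ht.2.le.trans hbN.2⟩
      _ ≤ b - a := by rw [one_mul]; exact h.g_iterate_sub_le hg1 ha hab hb N

lemma f_g_iterate_sub_le (h : MemA f g) (hg1 : ∀ t ∈ Icc (g 0) 1, deriv g t ≤ 1) {l : ℝ}
    (hl : 0 < l) {w z : ℝ} (hw : g 0 ≤ w) (hwz : w ≤ z) (hz : z ≤ 1) (N : ℕ)
    (hf : ∀ t ∈ Ioo (g^[N] w) (g^[N] z), deriv f t ≤ l) :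
    f (g^[N] z) - f (g^[N] w) ≤ l * (z - w) := by
  have hwI : w ∈ unitI := ⟨h.g0_pos.le.trans hw, hwz.trans hz⟩
  have hzI : z ∈ unitI := ⟨hwI.1.trans hwz, hz⟩
  calc f (g^[N] z) - f (g^[N] w) ≤ l * (g^[N] z - g^[N] w) :=
        sub_le_mul_sub_of_deriv_le h.differentiable_f
          ((h.strictMonoOn_g_iterate N).monotoneOn hwI hzI hwz) hf
    _ ≤ l * (z - w) := mul_le_mul_of_nonneg_left (h.g_iterate_sub_le hg1 hw hwz hz N) hl.le

lemma eventually_le_slope_calF_f_one (h : MemA f g) (c : ℝ) :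
    ∀ᶠ x in 𝓝[<] f 1, c ≤ slope (calF f g) (f 1) x := by
  -- `𝓕 (f 1) = 1`, while `𝓕 ≤ g² 0 < 1` just to the left of `f 1`
  set d := 1 - g (g 0)
  have hd : 0 < d := sub_pos.2 h.g_g_zero_lt_one
  have hlt : max (f (g 0)) (f 1 - d / (|c| + 1)) < f 1 :=
    max_lt (h.f_g_zero_lt_f_f_one.trans_le (h.f_le (h.f_maps ⟨zero_le_one, le_rfl⟩)))
      (sub_lt_self _ (by positivity))
  filter_upwards [Ioo_mem_nhdsLT hlt] with x hx
  have hx1 : f (g 0) < x := (le_max_left _ _).trans_lt hx.1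
  have hcalF : calF f g x ≤ g (g 0) := (h.calF_spec ⟨hx1, hx.2⟩).1.2
  have hclose : (|c| + 1) * (f 1 - x) < d := by
    have := (le_max_right _ _).trans_lt hx.1
    rw [sub_lt_comm, lt_div_iff₀ (by positivity)] at this
    linarith
  have hc : c * (f 1 - x) ≤ |c| * (f 1 - x) :=
    mul_le_mul_of_nonneg_right (le_abs_self c) (sub_nonneg.2 hx.2.le)
  rw [slope_def_field, h.calF_f_one, le_div_iff_of_neg (sub_neg.2 hx.2)]
  linarith [hx.2]

lemma eventually_le_slope_calF_of_lt (h : MemA f g) {Hf : Set ℝ} (hHf : IsClosed Hf) {l : ℝ}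
    (hl : 0 < l) (hg1 : ∀ t ∈ Icc (g 0) 1, deriv g t ≤ 1)
    (hf : ∀ t ∈ unitI, f t ∉ Hf → deriv f t ≤ l) {y : ℝ} (hy : y ∈ Ioo (f (g 0)) (f 1))
    (hyH : y ∉ Hf) : ∀ᶠ x in 𝓝[<] y, l⁻¹ ≤ slope (calF f g) y x := by
  obtain ⟨hz, N, hyN⟩ := h.calF_spec hy
  set z := calF f g y
  have hzI : z ∈ unitI := ⟨h.g0_pos.le.trans hz.1.le, hz.2.trans h.g_g_zero_lt_one.le⟩
  set u := g^[N] z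
  have hgood : {t | f t ∉ Hf} ∈ 𝓝 u :=
    (hHf.isOpen_compl.preimage h.continuous_f).mem_nhds (by simpa [hyN] using hyH)
  obtain ⟨a, ha, hau⟩ := exists_Ioc_subset_of_mem_nhds hgood ⟨u - 1, sub_one_lt u⟩
  have hev : ∀ᶠ w in 𝓝[<] z, g 0 < w ∧ a < g^[N] w := by
    filter_upwards [Ioo_mem_nhdsLT hz.1, nhdsWithin_le_nhds
      (((h.continuous_g.iterate N).tendsto z).eventually (lt_mem_nhds ha))] with w hw hwa
    exact ⟨hw.1, hwa⟩
  have hIcc : Icc (g 0) z ⊆ unitI := fun t ht => ⟨h.g0_pos.le.trans ht.1, ht.2.trans hzI.2⟩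
  have hmono : StrictMonoOn (f ∘ g^[N]) (Icc (g 0) z) :=
    (h.strictMonoOn_f.comp (h.strictMonoOn_g_iterate N) (h.g_maps.iterate N)).mono hIcc
  -- near `y = f (gᴺ z)`, `𝓕` inverts the increasing branch `f ∘ gᴺ`
  rw [← hyN]
  refine eventually_nhdsLT_of_eventually_comp hz.1
    ((h.continuous_f.comp (h.continuous_g.iterate N)).continuousOn) hmono ?_
  filter_upwards [hev, self_mem_nhdsWithin] with w ⟨hw0, hwa⟩ hwz
  have hwI : w ∈ unitI := hIcc ⟨hw0.le, le_of_lt hwz⟩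
  have hlt : f (g^[N] w) < f u := hmono ⟨hw0.le, le_of_lt hwz⟩ ⟨hz.1.le, le_rfl⟩ hwz
  have hstep : f u - f (g^[N] w) ≤ l * (z - w) :=
    h.f_g_iterate_sub_le hg1 hl hw0.le (le_of_lt hwz) hzI.2 N fun t ht =>
      hf t ⟨(h.g_iterate_mem hwI N).1.trans ht.1.le, ht.2.le.trans (h.g_iterate_mem hzI N).2⟩
        (hau ⟨hwa.trans ht.1, ht.2.le⟩)
  have key : l⁻¹ * (f u - f (g^[N] w)) ≤ z - w := by
    rw [inv_mul_le_iff₀ hl]; exact hstep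
  rw [hyN] at hlt key ⊢
  rw [Function.comp_apply, slope_def_field, h.calF_f_g_iterate ⟨hw0, (le_of_lt hwz).trans hz.2⟩,
    ← neg_div_neg_eq, neg_sub, neg_sub, le_div_iff₀ (sub_pos.2 hlt)]
  exact key

lemma eventually_le_slope_calF (h : MemA f g) {Hf : Set ℝ} (hHf : IsClosed Hf) {l : ℝ}
    (hl : 0 < l) (hg1 : ∀ t ∈ Icc (g 0) 1, deriv g t ≤ 1)
    (hf : ∀ t ∈ unitI, f t ∉ Hf → deriv f t ≤ l) {y : ℝ} (hy : y ∈ Fint f 1 \ Hf) :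
    ∀ᶠ x in 𝓝[<] y, l⁻¹ ≤ slope (calF f g) y x := by
  rw [Fint_one] at hy
  rcases hy.1.2.eq_or_lt with rfl | hlt
  · exact h.eventually_le_slope_calF_f_one _
  · exact h.eventually_le_slope_calF_of_lt hHf hl hg1 hf
      ⟨h.f_g_zero_lt_f_f_one.trans_le hy.1.1, hlt⟩ hy.2

end MemA

/-! ## The mirror symmetry -/

/-- Conjugation by the reflection `x ↦ 1 - x`; it exchanges the roles of `f` and `g`. -/
def mirror (f : ℝ → ℝ) : ℝ → ℝ := fun x => 1 - f (1 - x)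

@[simp]
lemma mirror_apply (f : ℝ → ℝ) (x : ℝ) : mirror f x = 1 - f (1 - x) := rfl

lemma deriv_mirror (f : ℝ → ℝ) (x : ℝ) : deriv (mirror f) x = deriv f (1 - x) := by
  rw [show mirror f = fun x => 1 - f (1 - x) from rfl, deriv_const_sub, deriv_comp_const_sub,
    neg_neg]

lemma one_sub_mem_unitI {x : ℝ} (hx : x ∈ unitI) : 1 - x ∈ unitI :=
  ⟨sub_nonneg.2 hx.2, sub_le_self _ hx.1⟩

lemma Fint_mirror_one (g : ℝ → ℝ) : Fint (mirror g) 1 = Icc (1 - g (g 0)) (1 - g 0) := by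
  simp [Fint_one]

namespace MemA

variable {f g : ℝ → ℝ}

lemma mirror (h : MemA f g) : MemA (mirror g) (mirror f) where
  f_maps _ hx := one_sub_mem_unitI (h.g_maps (one_sub_mem_unitI hx))
  g_maps _ hx := one_sub_mem_unitI (h.f_maps (one_sub_mem_unitI hx))
  f_c1 := contDiff_const.sub (h.g_c1.comp (contDiff_const.sub contDiff_id))
  g_c1 := contDiff_const.sub (h.f_c1.comp (contDiff_const.sub contDiff_id))
  f_inj x hx y hy hxy := by
    have := h.g_inj (one_sub_mem_unitI hx) (one_sub_mem_unitI hy) (by simpa using hxy)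
    linarith
  g_inj x hx y hy hxy := by
    have := h.f_inj (one_sub_mem_unitI hx) (one_sub_mem_unitI hy) (by simpa using hxy)
    linarith
  f_deriv_ne x hx := by rw [deriv_mirror]; exact h.g_deriv_ne _ (one_sub_mem_unitI hx)
  g_deriv_ne x hx := by rw [deriv_mirror]; exact h.f_deriv_ne _ (one_sub_mem_unitI hx)
  f_zero := by simp [h.g_one]
  g_one := by simp [h.f_zero]
  f_lt_id x hx := by
    have := h.id_lt_g (1 - x) ⟨sub_pos.2 hx.2, sub_lt_self _ hx.1⟩
    simp only [mirror_apply]; linarith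
  id_lt_g x hx := by
    have := h.f_lt_id (1 - x) ⟨sub_pos.2 hx.2, sub_lt_self _ hx.1⟩
    simp only [mirror_apply]; linarith
  g0_pos := by simpa using h.f1_lt_one
  g0_lt_f1 := by simpa using h.g0_lt_f1
  f1_lt_one := by simpa using h.g0_pos

end MemA

section Mirror

variable {f g : ℝ → ℝ}

lemma invFunOn_f_iterate_mem (h : MemA f g) {z : ℝ} (hz : z ∈ Icc 0 (f 1)) :
    ∀ n, (∀ j < n, (invFunOn f unitI)^[j] z ∉ Fint f 1) → (invFunOn f unitI)^[n] z ∈ Icc 0 (f 1)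
  | 0, _ => hz
  | n + 1, hj => by
    have hn := invFunOn_f_iterate_mem h hz n fun j hjn => hj j (hjn.trans n.lt_succ_self)
    have hlt : (invFunOn f unitI)^[n] z < f (f 1) := by
      by_contra! hle
      exact hj n n.lt_succ_self (by rw [Fint_one]; exact ⟨hle, hn.2⟩)
    obtain ⟨hvI, hfv⟩ := h.invFunOn_f_mem hn
    rw [Function.iterate_succ_apply']
    refine ⟨hvI.1, le_of_lt ?_⟩
    by_contra! hle
    exact hlt.not_ge (hfv ▸ h.strictMonoOn_f.monotoneOn (h.f_maps ⟨zero_le_one, le_rfl⟩) hvI hle)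

lemma invFunOn_mirror_iterate (h : MemA f g) {z : ℝ} (hz : z ∈ Icc 0 (f 1)) :
    ∀ n, (∀ j < n, (invFunOn f unitI)^[j] z ∉ Fint f 1) →
      (invFunOn (mirror f) unitI)^[n] (1 - z) = 1 - (invFunOn f unitI)^[n] z
  | 0, _ => rfl
  | n + 1, hj => by
    have hj' : ∀ j < n, (invFunOn f unitI)^[j] z ∉ Fint f 1 := fun j hjn =>
      hj j (hjn.trans n.lt_succ_self)
    obtain ⟨hvI, hfv⟩ := h.invFunOn_f_mem (invFunOn_f_iterate_mem h hz n hj')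
    rw [Function.iterate_succ_apply', Function.iterate_succ_apply',
      invFunOn_mirror_iterate h hz n hj']
    conv_lhs => rw [← hfv]
    simpa using h.mirror.g_inj.leftInvOn_invFunOn (one_sub_mem_unitI hvI)

/-- The restriction on `x` keeps the backward orbit where `invFunOn` is a genuine inverse. -/
lemma calG_eq_one_sub_calF_mirror (h : MemA f g) {x : ℝ} (hx : x ∈ Icc (g 0) (g (f 1))) :
    calG f g x = 1 - calF (mirror g) (mirror f) (1 - x) := by
  obtain ⟨hzI, hgz⟩ :=
    h.invFunOn_g_mem ⟨hx.1, hx.2.trans (h.g_maps (h.f_maps ⟨zero_le_one, le_rfl⟩)).2⟩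
  set z := invFunOn g unitI x
  have hz : z ∈ Icc 0 (f 1) := by
    refine ⟨hzI.1, ?_⟩
    by_contra! hlt
    exact hx.2.not_gt (hgz ▸ h.strictMonoOn_g (h.f_maps ⟨zero_le_one, le_rfl⟩) hzI hlt)
  have hz' : invFunOn (mirror g) unitI (1 - x) = 1 - z := by
    simpa [hgz] using h.mirror.f_inj.leftInvOn_invFunOn (one_sub_mem_unitI hzI)
  have hmem : ∀ w, 1 - w ∈ Gint (mirror f) 1 ↔ w ∈ Fint f 1 := fun w => by
    simp only [Gint_one, Fint_one, mirror_apply, sub_zero, sub_sub_cancel, mem_Icc,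
      sub_le_sub_iff_left]
    exact and_comm
  have hsInf : sInf {n | (invFunOn f unitI)^[n] z ∈ Fint f 1} =
      sInf {n | (invFunOn (mirror f) unitI)^[n] (1 - z) ∈ Gint (mirror f) 1} :=
    Nat.sInf_eq_of_mem_iff_of_forall_lt_notMem fun n hn => by
      rw [Set.mem_ofPred_eq, Set.mem_ofPred_eq, invFunOn_mirror_iterate h hz n hn, hmem]
  rw [calF, hz', ← hsInf,
    invFunOn_mirror_iterate h hz (sInf {n | (invFunOn f unitI)^[n] z ∈ Fint f 1})
      fun j hj => Nat.notMem_of_lt_sInf hj, sub_sub_cancel]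
  rfl

lemma mem_Rg_of_one_sub_mem_Rf_mirror (h : MemA f g) {Hf : Set ℝ} {x : ℝ}
    (hx : 1 - x ∈ Rf (mirror g) (mirror f) ((1 - ·) ⁻¹' Hf)) : x ∈ Rg f g Hf := by
  obtain ⟨⟨hxF, hx1⟩, hxH⟩ := hx
  rw [Fint_mirror_one, mem_Icc, sub_le_sub_iff_left, sub_le_sub_iff_left] at hxF
  have hxG : x ∈ Gint g 1 := by rw [Gint_one]; exact ⟨hxF.2, hxF.1⟩
  refine ⟨⟨hxG, fun hx0 => hx1 (by simp [(mem_singleton_iff.1 hx0)])⟩, ?_⟩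
  rw [calG_eq_one_sub_calF_mirror h ⟨hxF.2, hxF.1.trans h.g_g_zero_lt_g_f_one.le⟩]
  exact hxH

lemma eventually_le_slope_calG (h : MemA f g) {Hg : Set ℝ} (hHg : IsClosed Hg) {l : ℝ}
    (hl : 0 < l) (hf1 : ∀ t ∈ Icc 0 (f 1), deriv f t ≤ 1)
    (hg : ∀ t ∈ unitI, g t ∉ Hg → deriv g t ≤ l) {y : ℝ} (hy : y ∈ Gint g 1 \ Hg) :
    ∀ᶠ x in 𝓝[>] y, l⁻¹ ≤ slope (calG f g) y x := by
  rw [Gint_one] at hy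
  have hmirror := h.mirror.eventually_le_slope_calF (Hf := (1 - ·) ⁻¹' Hg)
    (hHg.preimage (continuous_const.sub continuous_id)) hl
    (fun t ht => by
      rw [deriv_mirror]
      have := ht.1
      rw [mirror_apply, sub_zero] at this
      exact hf1 _ ⟨sub_nonneg.2 ht.2, by linarith⟩)
    (fun t ht htH => by
      rw [deriv_mirror]
      exact hg _ (one_sub_mem_unitI ht) (by simpa using htH))
    (y := 1 - y) ⟨by rw [Fint_mirror_one]; exact ⟨by linarith [hy.1.2], by linarith [hy.1.1]⟩,
      by simpa using hy.2⟩
  have hy' : y ∈ Icc (g 0) (g (f 1)) := ⟨hy.1.1, hy.1.2.trans h.g_g_zero_lt_g_f_one.le⟩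
  filter_upwards [map_subLeft_nhdsGT.le hmirror, self_mem_nhdsWithin,
    nhdsWithin_le_nhds (Iio_mem_nhds (hy.1.2.trans_lt h.g_g_zero_lt_g_f_one))] with x hx hyx hxf
  have hx' : x ∈ Icc (g 0) (g (f 1)) := ⟨hy'.1.trans (le_of_lt hyx), le_of_lt hxf⟩
  rw [slope_def_field, calG_eq_one_sub_calF_mirror h hx', calG_eq_one_sub_calF_mirror h hy']
  have hx : l⁻¹ ≤ slope (calF (mirror g) (mirror f)) (1 - y) (1 - x) := hx
  rw [slope_def_field] at hx
  convert hx using 1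
  rw [← neg_div_neg_eq]
  ring_nf

end Mirror

section Criteria

variable {f g : ℝ → ℝ}

lemma Ioo_subset_Rf (h : MemA f g) {p q : ℝ} (hp : f 1 < p) (hpq : p ≤ q) (hq : q ≤ g (g 0)) :
    Ioo (f (g p)) (f (g q)) ⊆ Rf f g (Icc p q) := by
  intro x hx
  obtain ⟨z, hz, rfl⟩ := intermediate_value_Ioo hpq
    (h.continuous_f.comp h.continuous_g).continuousOn hx
  have hzI : z ∈ unitI :=
    ⟨h.f_one_pos.le.trans (hp.trans hz.1).le, hz.2.le.trans (hq.trans h.g_g_zero_lt_one.le)⟩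
  have hqI : q ∈ unitI := ⟨hzI.1.trans hz.2.le, hq.trans h.g_g_zero_lt_one.le⟩
  have hcalF : calF f g (f (g z)) = z :=
    h.calF_f_g_iterate (N := 1) ⟨h.g0_lt_f1.trans (hp.trans hz.1), hz.2.le.trans hq⟩
  have hfg_le : f (g q) ≤ f 1 :=
    h.strictMonoOn_f.monotoneOn (h.g_maps hqI) ⟨zero_le_one, le_rfl⟩ (h.g_maps hqI).2
  refine ⟨⟨?_, (hx.2.trans_le hfg_le).ne⟩, by
    show calF f g (f (g z)) ∈ _
    rw [hcalF]; exact ⟨hz.1.le, hz.2.le⟩⟩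
  rw [Fint_one]
  refine ⟨h.strictMonoOn_f.monotoneOn (h.f_maps ⟨zero_le_one, le_rfl⟩) (h.g_maps hzI) ?_,
    hx.2.le.trans hfg_le⟩
  exact (hp.trans hz.1).le.trans (h.le_g hzI)

lemma Ioo_subset_Rg (h : MemA f g) {p q : ℝ} (hp : f (f 1) ≤ p) (hpq : p ≤ q) (hq : q < g 0) :
    Ioo (g (f p)) (g (f q)) ⊆ Rg f g (Icc p q) := by
  intro x hx
  apply mem_Rg_of_one_sub_mem_Rf_mirror h
  rw [preimage_const_sub_Icc]
  refine Ioo_subset_Rf h.mirror (by simpa using hq) (by linarith)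
    (by simp only [mirror_apply, sub_zero, sub_sub_cancel]; linarith) ?_
  simp only [mirror_apply, sub_sub_cancel, mem_Ioo]
  constructor <;> linarith [hx.1, hx.2]

theorem ca_of_lt (h : MemA f g) {p q p' q' : ℝ} (hp : f 1 < p) (hpq : p ≤ q)
    (hq : q ≤ g (g 0)) (hp' : f (f 1) ≤ p') (hpq' : p' ≤ q') (hq' : q' < g 0)
    (hfgp : f (g p) < g 0) (hgfq' : f 1 < g (f q')) (hgfp' : g (f p') < f (g q)) :
    Ca f g (Icc p' q') (Icc p q) := by
  intro x hx
  rcases lt_or_ge x (f (g q)) with hlt | hge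
  · exact Or.inl (interior_maximal (Ioo_subset_Rf h hp hpq hq) isOpen_Ioo
      ⟨hfgp.trans_le hx.1, hlt⟩)
  · exact Or.inr (interior_maximal (Ioo_subset_Rg h hp' hpq' hq') isOpen_Ioo
      ⟨hgfp'.trans_le hge, hx.2.trans_lt hgfq'⟩)

theorem holeAt_Icc (h : MemA f g) {p q : ℝ} (hpq : p < q) (hp : f (f 1) < p) (hq : q < g 0)
    (hfgp : f (g p) = p) (hfgq : f (g q) = q) (hgp : f 1 < g p) (hgq : g q < g (g 0)) :
    HoleAt f g (Icc p q) (Icc (g p) (g q)) := by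
  have hpI : p ∈ unitI :=
    ⟨(h.f_maps (h.f_maps ⟨zero_le_one, le_rfl⟩)).1.trans hp.le, (hpq.trans hq).le.trans
      h.g_zero_lt_one.le⟩
  have hqI : q ∈ unitI := ⟨hpI.1.trans hpq.le, hq.le.trans h.g_zero_lt_one.le⟩
  have hIcc : Icc p q ⊆ unitI := fun t ht => ⟨hpI.1.trans ht.1, ht.2.trans hqI.2⟩
  have hgpq : g p < g q := h.strictMonoOn_g hpI hqI hpq
  have hgIcc : Icc (g p) (g q) ⊆ unitI := fun t ht =>
    ⟨(h.g_maps hpI).1.trans ht.1, ht.2.trans (h.g_maps hqI).2⟩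
  refine ⟨⟨p, q, hpq, rfl⟩, ⟨g p, g q, hgpq, rfl⟩, ?_, ?_, ?_, ?_⟩
  · refine fun t ht => interior_maximal (t := Ioo (f (f 1)) (g 0)) (fun s hs => ?_) isOpen_Ioo
      ⟨hp.trans_le ht.1, ht.2.trans_lt hq⟩
    rw [Fint_one]
    exact ⟨⟨hs.1.le, hs.2.le.trans h.g0_lt_f1.le⟩, fun hW => hs.2.not_ge hW.1⟩
  · refine fun t ht => interior_maximal (t := Ioo (f 1) (g (g 0))) (fun s hs => ?_) isOpen_Ioo
      ⟨hgp.trans_le ht.1, ht.2.trans_lt hgq⟩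
    rw [Gint_one]
    exact ⟨⟨h.g0_lt_f1.le.trans hs.1.le, hs.2.le⟩, fun hW => hs.1.not_ge hW.2⟩
  · exact h.continuous_g.continuousOn.image_Icc_of_monotoneOn hpq.le
      (h.strictMonoOn_g.monotoneOn.mono hIcc)
  · rw [h.continuous_f.continuousOn.image_Icc_of_monotoneOn hgpq.le
      (h.strictMonoOn_f.monotoneOn.mono hgIcc), hfgp, hfgq]

theorem ee_of_deriv_le (h : MemA f g) {Hf Hg : Set ℝ} (hHf : IsClosed Hf) (hHg : IsClosed Hg)
    {l : ℝ} (hl0 : 0 < l) (hl1 : l < 1)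
    (hf1 : ∀ t ∈ Icc 0 (f 1), deriv f t ≤ 1) (hg1 : ∀ t ∈ Icc (g 0) 1, deriv g t ≤ 1)
    (hf : ∀ t ∈ unitI, f t ∉ Hf → deriv f t ≤ l) (hg : ∀ t ∈ unitI, g t ∉ Hg → deriv g t ≤ l) :
    Ee f g Hf Hg := by
  have hl : 1 < l⁻¹ := (one_lt_inv₀ hl0).2 hl1
  refine ⟨(1 + l⁻¹) / 2, by linarith, fun y hy hd => ?_, fun y hy hd => ?_⟩
  · have := le_deriv_of_eventually_le_slope (nhdsLT_le_nhdsNE y) hd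
      (h.eventually_le_slope_calF hHf hl0 hg1 hf hy)
    linarith
  · have := le_deriv_of_eventually_le_slope (nhdsGT_le_nhdsNE y) hd
      (eventually_le_slope_calG h hHg hl0 hf1 hg hy)
    linarith

end Criteria

/-! ## The model pair -/

def bump (m n : ℕ) (x : ℝ) : ℝ := x ^ m * (1 - x) ^ n

/-- The primitive of `bump m n` vanishing at `0`, expanded binomially. -/
def bumpPrimitive (m n : ℕ) (x : ℝ) : ℝ :=
  ∑ k ∈ Finset.range (n + 1), (n.choose k : ℝ) * (-1) ^ k * x ^ (m + k + 1) / (m + k + 1)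

lemma bump_nonneg (m n : ℕ) {x : ℝ} (hx : x ∈ unitI) : 0 ≤ bump m n x :=
  mul_nonneg (pow_nonneg hx.1 _) (pow_nonneg (sub_nonneg.2 hx.2) _)

lemma continuous_bump (m n : ℕ) : Continuous (bump m n) := by
  unfold bump; fun_prop

lemma hasDerivAt_bump (m n : ℕ) (x : ℝ) :
    HasDerivAt (bump (m + 1) (n + 1)) (x ^ m * (1 - x) ^ n * (m + 1 - (m + n + 2) * x)) x := by
  have : HasDerivAt (fun y => y ^ (m + 1) * (1 - y) ^ (n + 1)) _ x :=
    (hasDerivAt_pow (m + 1) x).mul (((hasDerivAt_id x).const_sub 1).pow (n + 1))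
  refine this.congr_deriv ?_
  simp only [id, Nat.add_sub_cancel]
  push_cast
  ring

lemma hasDerivAt_bumpPrimitive (m n : ℕ) (x : ℝ) :
    HasDerivAt (bumpPrimitive m n) (bump m n x) x := by
  have h : ∀ k ∈ Finset.range (n + 1), HasDerivAt
      (fun x => (n.choose k : ℝ) * (-1) ^ k * x ^ (m + k + 1) / (m + k + 1))
      ((n.choose k : ℝ) * (-1) ^ k * x ^ (m + k)) x := fun k _ => by
    refine (((hasDerivAt_pow (m + k + 1) x).const_mul
      ((n.choose k : ℝ) * (-1) ^ k)).div_const ((m + k + 1 : ℝ))).congr_deriv ?_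
    rw [Nat.add_sub_cancel]
    push_cast
    field_simp
  refine (HasDerivAt.fun_sum h).congr_deriv ?_
  rw [bump, sub_eq_neg_add, add_pow, Finset.mul_sum]
  refine Finset.sum_congr rfl fun k _ => ?_
  rw [neg_pow, one_pow, mul_one, pow_add]
  ring

lemma bump_monotoneOn (m n : ℕ) :
    MonotoneOn (bump (m + 1) (n + 1)) (Icc 0 ((m + 1) / (m + n + 2))) := by
  refine monotoneOn_of_deriv_nonneg (convex_Icc _ _) (continuous_bump _ _).continuousOn
    (fun x _ => (hasDerivAt_bump m n x).differentiableAt.differentiableWithinAt) fun x hx => ?_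
  rw [interior_Icc] at hx
  have hpeak : x * (m + n + 2) < m + 1 := (lt_div_iff₀ (by positivity)).1 hx.2
  rw [(hasDerivAt_bump m n x).deriv]
  refine mul_nonneg (mul_nonneg (pow_nonneg hx.1.le _) (pow_nonneg ?_ _)) (by linarith)
  nlinarith [(n.cast_nonneg : (0 : ℝ) ≤ n)]

lemma bump_antitoneOn (m n : ℕ) :
    AntitoneOn (bump (m + 1) (n + 1)) (Icc ((m + 1) / (m + n + 2)) 1) := by
  refine antitoneOn_of_deriv_nonpos (convex_Icc _ _) (continuous_bump _ _).continuousOn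
    (fun x _ => (hasDerivAt_bump m n x).differentiableAt.differentiableWithinAt) fun x hx => ?_
  rw [interior_Icc] at hx
  have hpeak : m + 1 < x * (m + n + 2) := (div_lt_iff₀ (by positivity)).1 hx.1
  have hx0 : 0 ≤ x := le_trans (by positivity) hx.1.le
  rw [(hasDerivAt_bump m n x).deriv]
  exact mul_nonpos_of_nonneg_of_nonpos
    (mul_nonneg (pow_nonneg hx0 _) (pow_nonneg (sub_nonneg.2 hx.2.le) _)) (by linarith)

lemma bump_le_of_le_of_le_peak {m n : ℕ} {x y : ℝ} (hx : 0 ≤ x) (hxy : x ≤ y)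
    (hy : y ≤ (m + 1) / (m + n + 2)) : bump (m + 1) (n + 1) x ≤ bump (m + 1) (n + 1) y :=
  bump_monotoneOn m n ⟨hx, hxy.trans hy⟩ ⟨hx.trans hxy, hy⟩ hxy

lemma bump_le_of_peak_le_of_le {m n : ℕ} {x y : ℝ} (hy : (m + 1) / (m + n + 2) ≤ y)
    (hyx : y ≤ x) (hx : x ≤ 1) : bump (m + 1) (n + 1) x ≤ bump (m + 1) (n + 1) y :=
  bump_antitoneOn m n ⟨hy, hyx.trans hx⟩ ⟨hy.trans hyx, hx⟩ hyx

lemma bump_le_peak (m n : ℕ) {x : ℝ} (hx : x ∈ unitI) :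
    bump (m + 1) (n + 1) x ≤ bump (m + 1) (n + 1) ((m + 1) / (m + n + 2)) := by
  rcases le_total x ((m + 1) / (m + n + 2)) with h | h
  · exact bump_le_of_le_of_le_peak hx.1 h le_rfl
  · exact bump_le_of_peak_le_of_le le_rfl h hx.2

-- These constants make `model (14/25) = 4/25` and `model (21/25) = 11/25`, so that the
-- model pair has `f ∘ g`-fixed points `4/25` and `11/25`.
def coefA : ℝ :=
  13678635029219797594715304845006643988787573374652854194409101535795375777492887782327 /
    275005640141459758806662217580933713912324785171026331198618208873085677623748779296875

def coefB : ℝ :=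
  32837004219717057230892202847091731717924704375324106024968571 /
    294426161375787646889782890478739710211753845214843750

lemma coefA_pos : 0 < coefA := by norm_num [coefA]

lemma coefB_pos : 0 < coefB := by norm_num [coefB]

def modelDeriv (x : ℝ) : ℝ :=
  coefA + 9 / 5 * bump 1 2 x + coefB * bump 21 9 x + 32000 * bump 40 3 x

def model (x : ℝ) : ℝ :=
  coefA * x + 9 / 5 * bumpPrimitive 1 2 x + coefB * bumpPrimitive 21 9 x +
    32000 * bumpPrimitive 40 3 x

lemma hasDerivAt_model (x : ℝ) : HasDerivAt model (modelDeriv x) x := by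
  refine (((((hasDerivAt_id x).const_mul coefA).add
    ((hasDerivAt_bumpPrimitive 1 2 x).const_mul (9 / 5))).add
    ((hasDerivAt_bumpPrimitive 21 9 x).const_mul coefB)).add
    ((hasDerivAt_bumpPrimitive 40 3 x).const_mul 32000)).congr_deriv ?_
  rw [mul_one, modelDeriv]

lemma deriv_model : deriv model = modelDeriv := funext fun x => (hasDerivAt_model x).deriv

lemma coefA_le_modelDeriv {x : ℝ} (hx : x ∈ unitI) : coefA ≤ modelDeriv x := by
  have := bump_nonneg 1 2 hx
  have := mul_nonneg coefB_pos.le (bump_nonneg 21 9 hx)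
  have := bump_nonneg 40 3 hx
  unfold modelDeriv
  linarith

lemma modelDeriv_le_of_bump_le {x a b c : ℝ} (ha : bump 1 2 x ≤ a) (hb : bump 21 9 x ≤ b)
    (hc : bump 40 3 x ≤ c) : modelDeriv x ≤ coefA + 9 / 5 * a + coefB * b + 32000 * c := by
  have := mul_le_mul_of_nonneg_left hb coefB_pos.le
  unfold modelDeriv
  linarith

lemma modelDeriv_le {x : ℝ} (hx : x ∈ unitI) (hcore : x ∉ Ioo (57 / 100) (83 / 100)) :
    modelDeriv x ≤ 97 / 100 := by
  rw [mem_Ioo, not_and_or, not_lt, not_lt] at hcore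
  rcases hcore with hlow | hhigh
  · refine (modelDeriv_le_of_bump_le (bump_le_peak 0 1 hx)
      (bump_le_of_le_of_le_peak hx.1 hlow (by norm_num))
      (bump_le_of_le_of_le_peak hx.1 hlow (by norm_num))).trans ?_
    norm_num [bump, coefA, coefB]
  rcases le_total x (9 / 10) with hx9 | hx9
  · refine (modelDeriv_le_of_bump_le (bump_le_of_peak_le_of_le (by norm_num) hhigh hx.2)
      (bump_le_of_peak_le_of_le (by norm_num) hhigh hx.2)
      (bump_le_of_le_of_le_peak hx.1 hx9 (by norm_num))).trans ?_
    norm_num [bump, coefA, coefB]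
  · refine (modelDeriv_le_of_bump_le (bump_le_of_peak_le_of_le (by norm_num) hx9 hx.2)
      (bump_le_of_peak_le_of_le (by norm_num) hx9 hx.2) (bump_le_peak 39 2 hx)).trans ?_
    norm_num [bump, coefA, coefB]

lemma memA_mirror_of {f : ℝ → ℝ} (hmaps : MapsTo f unitI unitI) (hc : ContDiff ℝ 1 f)
    (hinj : InjOn f unitI) (hd : ∀ x ∈ unitI, deriv f x ≠ 0) (h0 : f 0 = 0)
    (hlt : ∀ x ∈ Ioo (0 : ℝ) 1, f x < x) (hhalf : 1 / 2 < f 1) (h1 : f 1 < 1) :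
    MemA f (mirror f) where
  f_maps := hmaps
  g_maps _ hx := one_sub_mem_unitI (hmaps (one_sub_mem_unitI hx))
  f_c1 := hc
  g_c1 := contDiff_const.sub (hc.comp (contDiff_const.sub contDiff_id))
  f_inj := hinj
  g_inj x hx y hy hxy := by
    have := hinj (one_sub_mem_unitI hx) (one_sub_mem_unitI hy) (by simpa using hxy)
    linarith
  f_deriv_ne := hd
  g_deriv_ne x hx := by rw [deriv_mirror]; exact hd _ (one_sub_mem_unitI hx)
  f_zero := h0
  g_one := by simp [h0]
  f_lt_id := hlt
  id_lt_g x hx := by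
    have := hlt (1 - x) ⟨sub_pos.2 hx.2, sub_lt_self _ hx.1⟩
    simp only [mirror_apply]; linarith
  g0_pos := by simpa using h1
  g0_lt_f1 := by simp only [mirror_apply, sub_zero]; linarith
  f1_lt_one := h1

lemma model_zero : model 0 = 0 := by simp [model, bumpPrimitive]

lemma model_one_mem : model 1 ∈ Icc (51013 / 100000) (51014 / 100000) := by
  norm_num [model, bumpPrimitive, Finset.sum_range_succ, Nat.choose, coefA, coefB]

lemma strictMonoOn_model : StrictMonoOn model unitI :=
  strictMonoOn_of_deriv_pos (convex_Icc 0 1)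
    (fun x _ => (hasDerivAt_model x).continuousAt.continuousWithinAt)
    fun x hx => by
      rw [interior_Icc] at hx
      rw [deriv_model]
      exact coefA_pos.trans_le (coefA_le_modelDeriv ⟨hx.1.le, hx.2.le⟩)

lemma memA_model : MemA model (mirror model) := by
  have h1 := model_one_mem
  refine memA_mirror_of (fun x hx => ⟨?_, ?_⟩) ?_ strictMonoOn_model.injOn (fun x hx => ?_)
    model_zero (fun x hx => ?_) (by linarith [h1.1]) (by linarith [h1.2])
  · rw [← model_zero]; exact strictMonoOn_model.monotoneOn ⟨le_rfl, zero_le_one⟩ hx hx.1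
  · exact (strictMonoOn_model.monotoneOn hx ⟨zero_le_one, le_rfl⟩ hx.2).trans (by linarith [h1.2])
  · exact contDiff_one_iff_deriv.2 ⟨fun x => (hasDerivAt_model x).differentiableAt,
      by rw [deriv_model]; unfold modelDeriv bump; fun_prop⟩
  · rw [deriv_model]; exact (coefA_pos.trans_le (coefA_le_modelDeriv hx)).ne'
  · rcases le_total x (57 / 100) with hx57 | hx57
    · have := sub_le_mul_sub_of_deriv_le (fun y => (hasDerivAt_model y).differentiableAt) hx.1.le
        fun t ht => by
          rw [deriv_model]
          exact modelDeriv_le ⟨ht.1.le, ht.2.le.trans hx.2.le⟩ fun hcore =>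
            (ht.2.trans_le hx57).not_gt hcore.1
      rw [model_zero] at this
      linarith [hx.1]
    · have := strictMonoOn_model ⟨hx.1.le, hx.2.le⟩ ⟨zero_le_one, le_rfl⟩ hx.2
      linarith [h1.2]


/-! ## Perturbations of the model pair -/

def eps : ℝ := 1 / 1000000000

lemma eps_pos : 0 < eps := by norm_num [eps]

structure NearModel (F G : ℝ → ℝ) : Prop where
  memA : MemA F G
  f_close : ∀ x ∈ unitI, |F x - model x| ≤ eps
  deriv_f_close : ∀ x ∈ unitI, |deriv F x - deriv model x| ≤ eps
  g_close : ∀ x ∈ unitI, |G x - mirror model x| ≤ eps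
  deriv_g_close : ∀ x ∈ unitI, |deriv G x - deriv (mirror model) x| ≤ eps

namespace NearModel

variable {F G : ℝ → ℝ}

lemma of_close (hA : MemA F G)
    (hF : ∀ x ∈ unitI, ∀ y ∈ unitI, |F x - model x| + |deriv F y - deriv model y| < eps)
    (hG : ∀ x ∈ unitI, ∀ y ∈ unitI,
      |G x - mirror model x| + |deriv G y - deriv (mirror model) y| < eps) :
    NearModel F G where
  memA := hA
  f_close x hx := by
    linarith [hF x hx 0 ⟨le_rfl, zero_le_one⟩, abs_nonneg (deriv F 0 - deriv model 0)]
  deriv_f_close y hy := by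
    linarith [hF 0 ⟨le_rfl, zero_le_one⟩ y hy, abs_nonneg (F 0 - model 0)]
  g_close x hx := by
    linarith [hG x hx 0 ⟨le_rfl, zero_le_one⟩,
      abs_nonneg (deriv G 0 - deriv (mirror model) 0)]
  deriv_g_close y hy := by
    linarith [hG 0 ⟨le_rfl, zero_le_one⟩ y hy, abs_nonneg (G 0 - mirror model 0)]

lemma model_mirror : NearModel model (mirror model) where
  memA := memA_model
  f_close _ _ := by simp [eps_pos.le]
  deriv_f_close _ _ := by simp [eps_pos.le]
  g_close _ _ := by simp [eps_pos.le]
  deriv_g_close _ _ := by simp [eps_pos.le]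

lemma mirror (h : NearModel F G) : NearModel (mirror G) (mirror F) where
  memA := h.memA.mirror
  f_close x hx := by
    refine le_of_eq_of_le ?_ (h.g_close (1 - x) (one_sub_mem_unitI hx))
    rw [← abs_neg]
    simp only [mirror_apply, sub_sub_cancel]
    ring_nf
  deriv_f_close x hx := by
    have := h.deriv_g_close (1 - x) (one_sub_mem_unitI hx)
    rwa [deriv_mirror model, sub_sub_cancel, ← deriv_mirror] at this
  g_close x hx := by
    refine le_of_eq_of_le ?_ (h.f_close (1 - x) (one_sub_mem_unitI hx))
    rw [← abs_neg]
    simp only [mirror_apply]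
    ring_nf
  deriv_g_close x hx := by
    have := h.deriv_f_close (1 - x) (one_sub_mem_unitI hx)
    rwa [← deriv_mirror, ← deriv_mirror] at this

lemma f_le (h : NearModel F G) {x b c : ℝ} (hx : x ∈ unitI) (hb : b ∈ unitI) (hxb : x ≤ b)
    (hc : model b ≤ c) : F x ≤ c + eps := by
  have := (abs_le.1 (h.f_close b hb)).2
  linarith [h.memA.strictMonoOn_f.monotoneOn hx hb hxb]

lemma le_f (h : NearModel F G) {x a c : ℝ} (ha : a ∈ unitI) (hx : x ∈ unitI) (hax : a ≤ x)
    (hc : c ≤ model a) : c - eps ≤ F x := by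
  have := (abs_le.1 (h.f_close a ha)).1
  linarith [h.memA.strictMonoOn_f.monotoneOn ha hx hax]

lemma g_le (h : NearModel F G) {x b c : ℝ} (hx : x ∈ unitI) (hb : b ∈ unitI) (hxb : x ≤ b)
    (hc : c ≤ model (1 - b)) : G x ≤ 1 - c + eps := by
  have := h.mirror.le_f (one_sub_mem_unitI hb) (one_sub_mem_unitI hx) (by linarith) hc
  rw [mirror_apply, sub_sub_cancel] at this
  linarith

lemma le_g (h : NearModel F G) {x a c : ℝ} (ha : a ∈ unitI) (hx : x ∈ unitI) (hax : a ≤ x)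
    (hc : model (1 - a) ≤ c) : 1 - c - eps ≤ G x := by
  have := h.mirror.f_le (one_sub_mem_unitI hx) (one_sub_mem_unitI ha) (by linarith) hc
  rw [mirror_apply, sub_sub_cancel] at this
  linarith

lemma f_one_mem (h : NearModel F G) : F 1 ∈ Icc (51012 / 100000) (51015 / 100000) := by
  have := abs_le.1 (h.f_close 1 ⟨zero_le_one, le_rfl⟩)
  have := model_one_mem
  constructor <;> linarith [this.1, this.2, show eps = 1 / 1000000000 from rfl]

lemma f_f_one_le (h : NearModel F G) : F (F 1) ≤ 13567 / 100000 := by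
  have := h.f_le (h.memA.f_maps ⟨zero_le_one, le_rfl⟩) (b := 51015 / 100000) (c := 13566 / 100000)
    (by norm_num [unitI]) h.f_one_mem.2 (by norm_num [model, bumpPrimitive,
      Finset.sum_range_succ, Nat.choose, coefA, coefB])
  linarith [show eps = 1 / 1000000000 from rfl]

lemma g_zero_mem (h : NearModel F G) : G 0 ∈ Icc (48985 / 100000) (48988 / 100000) := by
  have := h.mirror.f_one_mem
  rw [mirror_apply, sub_self] at this
  constructor <;> linarith [this.1, this.2]

lemma le_g_g_zero (h : NearModel F G) : 86433 / 100000 ≤ G (G 0) := by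
  have := h.mirror.f_f_one_le
  simp only [mirror_apply, sub_self, sub_sub_cancel] at this
  linarith

lemma g_mem_Icc_of_mem_Icc_15_17 (h : NearModel F G) {x : ℝ} (hx : x ∈ Icc (15 / 100) (17 / 100)) :
    G x ∈ Icc (55602 / 100000) (56428 / 100000) := by
  have hxI : x ∈ unitI := ⟨by linarith [hx.1], by linarith [hx.2]⟩
  have hlo := h.le_g (a := 15 / 100) (c := 44397 / 100000) (by norm_num [unitI]) hxI hx.1
    (by norm_num [model, bumpPrimitive, Finset.sum_range_succ, Nat.choose, coefA, coefB])
  have hhi := h.g_le (b := 17 / 100) (c := 43573 / 100000) hxI (by norm_num [unitI]) hx.2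
    (by norm_num [model, bumpPrimitive, Finset.sum_range_succ, Nat.choose, coefA, coefB])
  constructor <;> linarith [show eps = 1 / 1000000000 from rfl]

lemma g_mem_Icc_of_mem_Icc_43_45 (h : NearModel F G) {x : ℝ} (hx : x ∈ Icc (43 / 100) (45 / 100)) :
    G x ∈ Icc (8337 / 10000) (84575 / 100000) := by
  have hxI : x ∈ unitI := ⟨by linarith [hx.1], by linarith [hx.2]⟩
  have hlo := h.le_g (a := 43 / 100) (c := 16629 / 100000) (by norm_num [unitI]) hxI hx.1
    (by norm_num [model, bumpPrimitive, Finset.sum_range_succ, Nat.choose, coefA, coefB])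
  have hhi := h.g_le (b := 45 / 100) (c := 15426 / 100000) hxI (by norm_num [unitI]) hx.2
    (by norm_num [model, bumpPrimitive, Finset.sum_range_succ, Nat.choose, coefA, coefB])
  constructor <;> linarith [show eps = 1 / 1000000000 from rfl]

lemma deriv_f_le (h : NearModel F G) {t : ℝ} (ht : t ∈ unitI)
    (hcore : t ∉ Ioo (57 / 100) (83 / 100)) : deriv F t ≤ 49 / 50 := by
  have := (abs_le.1 (h.deriv_f_close t ht)).2
  rw [deriv_model] at this
  linarith [modelDeriv_le ht hcore, show eps = 1 / 1000000000 from rfl]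

lemma deriv_f_le_one (h : NearModel F G) {t : ℝ} (ht : t ∈ Icc 0 (F 1)) : deriv F t ≤ 1 := by
  have := h.f_one_mem.2
  linarith [h.deriv_f_le ⟨ht.1, by linarith [ht.2]⟩ fun hcore => by linarith [hcore.1, ht.2]]

lemma deriv_g_le_one (h : NearModel F G) {t : ℝ} (ht : t ∈ Icc (G 0) 1) : deriv G t ≤ 1 := by
  have := h.mirror.deriv_f_le_one (t := 1 - t)
    ⟨sub_nonneg.2 ht.2, by simp only [mirror_apply, sub_self]; linarith [ht.1]⟩
  rwa [deriv_mirror, sub_sub_cancel] at this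

end NearModel

structure Holes (F G : ℝ → ℝ) (p q : ℝ) : Prop where
  near : NearModel F G
  p_mem : p ∈ Icc (15 / 100) (17 / 100)
  q_mem : q ∈ Icc (43 / 100) (45 / 100)
  f_g_p : F (G p) = p
  f_g_q : F (G q) = q

namespace NearModel

variable {F G : ℝ → ℝ}

lemma exists_holes (h : NearModel F G) : ∃ p q, Holes F G p q := by
  have he : eps = 1 / 1000000000 := rfl
  have hcont : Continuous (F ∘ G) := h.memA.continuous_f.comp h.memA.continuous_g
  have hG15 := h.g_mem_Icc_of_mem_Icc_15_17 (x := 15 / 100) (by norm_num)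
  have hG17 := h.g_mem_Icc_of_mem_Icc_15_17 (x := 17 / 100) (by norm_num)
  have hG43 := h.g_mem_Icc_of_mem_Icc_43_45 (x := 43 / 100) (by norm_num)
  have hG45 := h.g_mem_Icc_of_mem_Icc_43_45 (x := 45 / 100) (by norm_num)
  have hI {x : ℝ} (hx : x ∈ Icc (55602 / 100000) (84575 / 100000)) : x ∈ unitI :=
    ⟨by linarith [hx.1], by linarith [hx.2]⟩
  have h15 := h.le_f (a := 55602 / 100000) (c := 15765 / 100000) (by norm_num [unitI])
    (hI ⟨hG15.1, by linarith [hG15.2]⟩) hG15.1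
    (by norm_num [model, bumpPrimitive, Finset.sum_range_succ, Nat.choose, coefA, coefB])
  have h17 := h.f_le (b := 56428 / 100000) (c := 16262 / 100000)
    (hI ⟨hG17.1, by linarith [hG17.2]⟩) (by norm_num [unitI]) hG17.2
    (by norm_num [model, bumpPrimitive, Finset.sum_range_succ, Nat.choose, coefA, coefB])
  have h43 := h.le_f (a := 8337 / 10000) (c := 43736 / 100000) (by norm_num [unitI])
    (hI ⟨by linarith [hG43.1], hG43.2⟩) hG43.1
    (by norm_num [model, bumpPrimitive, Finset.sum_range_succ, Nat.choose, coefA, coefB])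
  have h45 := h.f_le (b := 84575 / 100000) (c := 44231 / 100000)
    (hI ⟨by linarith [hG45.1], hG45.2⟩) (by norm_num [unitI]) hG45.2
    (by norm_num [model, bumpPrimitive, Finset.sum_range_succ, Nat.choose, coefA, coefB])
  obtain ⟨p, hp, hfp⟩ := exists_mem_Icc_eq_self (a := 15 / 100) (b := 17 / 100) (by norm_num)
    hcont.continuousOn
    (by simp only [Function.comp_apply]; linarith) (by simp only [Function.comp_apply]; linarith)
  obtain ⟨q, hq, hfq⟩ := exists_mem_Icc_eq_self (a := 43 / 100) (b := 45 / 100) (by norm_num)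
    hcont.continuousOn
    (by simp only [Function.comp_apply]; linarith) (by simp only [Function.comp_apply]; linarith)
  exact ⟨p, q, h, hp, hq, hfp, hfq⟩

end NearModel

namespace Holes

variable {F G : ℝ → ℝ} {p q : ℝ}

lemma g_p_mem (H : Holes F G p q) : G p ∈ Icc (55602 / 100000) (56428 / 100000) :=
  H.near.g_mem_Icc_of_mem_Icc_15_17 H.p_mem

lemma g_q_mem (H : Holes F G p q) : G q ∈ Icc (8337 / 10000) (84575 / 100000) :=
  H.near.g_mem_Icc_of_mem_Icc_43_45 H.q_mem

lemma f_g_g_p_le (H : Holes F G p q) : F (G (G p)) ≤ 4608 / 10000 := by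
  have he : eps = 1 / 1000000000 := rfl
  have hGp := H.g_p_mem
  have hGpI : G p ∈ unitI := ⟨by linarith [hGp.1], by linarith [hGp.2]⟩
  have hGG := H.near.g_le (b := 56428 / 100000) (c := 10996 / 100000) hGpI
    (by norm_num [unitI]) hGp.2
    (by norm_num [model, bumpPrimitive, Finset.sum_range_succ, Nat.choose, coefA, coefB])
  have := H.near.f_le (b := 89006 / 100000) (c := 46075 / 100000) (H.near.memA.g_maps hGpI)
    (by norm_num [unitI]) (by linarith)
    (by norm_num [model, bumpPrimitive, Finset.sum_range_succ, Nat.choose, coefA, coefB])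
  linarith

lemma le_f_g_g_q (H : Holes F G p q) : 5066 / 10000 ≤ F (G (G q)) := by
  have he : eps = 1 / 1000000000 := rfl
  have hGq := H.g_q_mem
  have hGqI : G q ∈ unitI := ⟨by linarith [hGq.1], by linarith [hGq.2]⟩
  have hGG := H.near.le_g (a := 8337 / 10000) (c := 2799 / 100000) (by norm_num [unitI]) hGqI
    hGq.1 (by norm_num [model, bumpPrimitive, Finset.sum_range_succ, Nat.choose, coefA, coefB])
  have := H.near.le_f (a := 97199 / 100000) (c := 5067 / 10000) (by norm_num [unitI])
    (H.near.memA.g_maps hGqI) (by linarith)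
    (by norm_num [model, bumpPrimitive, Finset.sum_range_succ, Nat.choose, coefA, coefB])
  linarith

lemma mirror (H : Holes F G p q) : Holes (mirror G) (mirror F) (1 - G q) (1 - G p) where
  near := H.near.mirror
  p_mem := ⟨by linarith [H.g_q_mem.2], by linarith [H.g_q_mem.1]⟩
  q_mem := ⟨by linarith [H.g_p_mem.2], by linarith [H.g_p_mem.1]⟩
  f_g_p := by simp [H.f_g_q]
  f_g_q := by simp [H.f_g_p]

lemma deriv_f_le (H : Holes F G p q) {t : ℝ} (ht : t ∈ unitI) (hFt : F t ∉ Icc p q) :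
    deriv F t ≤ 49 / 50 := by
  refine H.near.deriv_f_le ht fun hcore => hFt ?_
  have hmono := H.near.memA.strictMonoOn_f.monotoneOn
  have hGp := H.g_p_mem
  have hGq := H.g_q_mem
  refine ⟨H.f_g_p ▸ hmono ⟨by linarith [hGp.1], by linarith [hGp.2]⟩ ht ?_,
    H.f_g_q ▸ hmono ht ⟨by linarith [hGq.1], by linarith [hGq.2]⟩ ?_⟩
  · linarith [hcore.1, hGp.2]
  · linarith [hcore.2, hGq.1]

lemma deriv_g_le (H : Holes F G p q) {t : ℝ} (ht : t ∈ unitI) (hGt : G t ∉ Icc (G p) (G q)) :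
    deriv G t ≤ 49 / 50 := by
  have := H.mirror.deriv_f_le (one_sub_mem_unitI ht) fun hmem => hGt ?_
  · rwa [deriv_mirror, sub_sub_cancel] at this
  · simp only [mirror_apply, sub_sub_cancel, mem_Icc] at hmem
    exact ⟨by linarith [hmem.2], by linarith [hmem.1]⟩

theorem memC (H : Holes F G p q) : MemC F G (Icc p q) (Icc (G p) (G q)) := by
  have h := H.near
  have hA := h.memA
  have hF1 := h.f_one_mem
  have hFF1 := h.f_f_one_le
  have hG0 := h.g_zero_mem
  have hGG0 := h.le_g_g_zero
  have hGp := H.g_p_mem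
  have hGq := H.g_q_mem
  have hp := H.p_mem
  have hq := H.q_mem
  -- the estimates needed on the `R_g` side are those of the `R_f` side for the mirrored holes
  have hGFq : 5392 / 10000 ≤ G (F q) := by
    have := H.mirror.f_g_g_p_le
    simp only [mirror_apply, sub_sub_cancel, H.f_g_q] at this
    linarith
  have hGFp : G (F p) ≤ 4934 / 10000 := by
    have := H.mirror.le_f_g_g_q
    simp only [mirror_apply, sub_sub_cancel, H.f_g_p] at this
    linarith
  refine ⟨hA, ⟨by linarith [hFF1, hG0.1], by linarith [hF1.2]⟩, ?_, ?_, ?_⟩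
  · exact holeAt_Icc hA (by linarith [hp.2, hq.1]) (by linarith [hp.1]) (by linarith [hq.2, hG0.1])
      H.f_g_p H.f_g_q (by linarith [hGp.1, hF1.2]) (by linarith [hGq.2])
  · exact ee_of_deriv_le hA isClosed_Icc isClosed_Icc (by norm_num) (by norm_num)
      (fun t ht => h.deriv_f_le_one ht) (fun t ht => h.deriv_g_le_one ht)
      (fun t ht hFt => H.deriv_f_le ht hFt) (fun t ht hGt => H.deriv_g_le ht hGt)
  · exact ca_of_lt hA (by linarith [hGp.1, hF1.2]) (by linarith [hGp.2, hGq.1])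
      (by linarith [hGq.2]) (by linarith [hp.1]) (by linarith [hp.2, hq.1])
      (by linarith [hq.2, hG0.1]) (by linarith [H.f_g_g_p_le, hG0.1])
      (by linarith [hF1.2]) (by linarith [H.le_f_g_g_q])

end Holes

/-- the class `𝒞` is nonempty and has a `C¹`-interior point within `𝒜`:
there are `(f,g) ∈ 𝒞` and `ε > 0` such that every `(f',g') ∈ 𝒜` which is `ε`-close to
`(f,g)` in the `C¹` sense (sup distance of maps plus sup distance of derivatives over `I`)
also satisfies `So`, `Ho`, `Ee` and `Ca` for some choice of holes. -/
theorem classC_has_interior_point :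
    ∃ (f g : ℝ → ℝ) (Hf Hg : Set ℝ) (ε : ℝ), 0 < ε ∧ MemC f g Hf Hg ∧
      ∀ f' g' : ℝ → ℝ, MemA f' g' →
        (∀ x ∈ unitI, ∀ y ∈ unitI, |f' x - f x| + |deriv f' y - deriv f y| < ε) →
        (∀ x ∈ unitI, ∀ y ∈ unitI, |g' x - g x| + |deriv g' y - deriv g y| < ε) →
        ∃ Hf' Hg' : Set ℝ, MemC f' g' Hf' Hg' := by
  obtain ⟨p, q, H⟩ := NearModel.model_mirror.exists_holes
  refine ⟨model, mirror model, _, _, eps, eps_pos, H.memC, fun F G hA hF hG => ?_⟩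
  obtain ⟨p', q', H'⟩ := (NearModel.of_close hA hF hG).exists_holes
  exact ⟨_, _, H'.memC⟩

end IFSPaper
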